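/- For all integers n ≥ 1 and k ≥ 1, the number of non-decreasing parking functions of length n with all values at most k equals the number of 132-avoiding permutations σ of {1,…,n} with mmp(0,k,0,0)(σ) = 0. -/

import Mathlib

/-- A permutation `σ` of `{1,…,n}` (as a permutation of `Fin n`) avoids the pattern 132 if
there are no indices `i < j < k` with `σ i < σ k < σ j`. -/
def Avoids132 (n : ℕ) (σ : Equiv.Perm (Fin n)) : Prop :=
  ∀ i j k : Fin n, i < j → j < k → ¬(σ i < σ k ∧ σ k < σ j)

/-- `mmp n a b c d σ` is the number of indices `i` matching the marked mesh pattern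
`MMP(a,b,c,d)` in `σ`: there are at least `a` indices `j > i` with `σ j > σ i`,
at least `b` indices `j < i` with `σ j > σ i`, at least `c` indices `j < i` with
`σ j < σ i`, and at least `d` indices `j > i` with `σ j < σ i`. -/
noncomputable def mmp (n a b c d : ℕ) (σ : Equiv.Perm (Fin n)) : ℕ :=
  Nat.card {i : Fin n |
    a ≤ Nat.card {j : Fin n | i < j ∧ σ i < σ j} ∧
    b ≤ Nat.card {j : Fin n | j < i ∧ σ i < σ j} ∧
    c ≤ Nat.card {j : Fin n | j < i ∧ σ j < σ i} ∧
    d ≤ Nat.card {j : Fin n | i < j ∧ σ j < σ i}}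

/-- A non-decreasing parking function of length `n`, written as `f : Fin n → ℕ` (0-based
positions, values in `{1,…,n}`): `f` is weakly increasing and `1 ≤ f i ≤ i + 1` for all
`i` (in 1-based terms, `f(i) ≤ i`, which also forces the values to lie in `{1,…,n}`). -/
def NDParking (n : ℕ) (f : Fin n → ℕ) : Prop :=
  Monotone f ∧ ∀ i : Fin n, 1 ≤ f i ∧ f i ≤ (i : ℕ) + 1

/-!
Both sides satisfy `C 0 k = 1`, `C (n + 1) 0 = 0` and, for `k ≥ 1`,
`C (n + 1) k = ∑_{m ≤ n} C m k * C (n - m) (k - (m + 1))`.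

For a non-decreasing parking function `f` (a Dyck path), `m + 1` is its first return: `f` is `1`,
then a parking function `u` of length `m`, then a parking function `w` of length `n - m` raised by
`m + 1`. For a 132-avoiding `σ` with its maximum at position `m`, every entry left of the maximum
exceeds every entry right of it, so `σ` is `(α ⊕ 1) ⊖ β` with `α`, `β` 132-avoiding; the number of
larger entries to the left of a position is the one in `α`, or `0`, or `m + 1` plus the one in `β`,
which turns the bound `< k` into `< k` on `α` and `< k - (m + 1)` on `β`.
-/

open Finset Equiv

def leftLarger {N : ℕ} (σ : Perm (Fin N)) (i : Fin N) : ℕ := #{j | j < i ∧ σ i < σ j}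

lemma mmp_zero_k_zero_zero_eq_zero_iff {n k : ℕ} {σ : Perm (Fin n)} :
    mmp n 0 k 0 0 σ = 0 ↔ ∀ i, leftLarger σ i < k := by
  rw [mmp, Finite.card_eq_zero_iff]
  simp [leftLarger, Set.eq_empty_iff_forall_notMem]

theorem card_eq_sum_of_glue {ι X : Type*} [Fintype ι] {A B : ι → Type*} [∀ i, Finite (A i)]
    [∀ i, Finite (B i)] {S : Set X} (g : ∀ i, A i → B i → X) (mem : ∀ i a b, g i a b ∈ S)
    (index_eq : ∀ i i' a b a' b', g i a b = g i' a' b' → i = i')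
    (inj : ∀ i a b a' b', g i a b = g i a' b' → a = a' ∧ b = b')
    (surj : ∀ x ∈ S, ∃ i a b, g i a b = x) :
    Nat.card S = ∑ i, Nat.card (A i) * Nat.card (B i) := by
  let G : (Σ i, A i × B i) → S := fun x => ⟨g x.1 x.2.1 x.2.2, mem _ _ _⟩
  have hG : Function.Bijective G := by
    refine ⟨?_, ?_⟩
    · rintro ⟨i, a, b⟩ ⟨i', a', b'⟩ h
      have h' : g i a b = g i' a' b' := congrArg Subtype.val h
      obtain rfl := index_eq _ _ _ _ _ _ h'
      obtain ⟨rfl, rfl⟩ := inj _ _ _ _ _ h'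
      rfl
    · rintro ⟨x, hx⟩
      obtain ⟨i, a, b, rfl⟩ := surj x hx
      exact ⟨⟨i, a, b⟩, rfl⟩
  simp only [← Nat.card_eq_of_bijective G hG, Nat.card_sigma, Nat.card_prod]

section Positions

variable {n : ℕ} (m : Fin (n + 1))

def leftPos (t : Fin m) : Fin (n + 1) := ⟨t, t.2.trans m.2⟩

def rightPos (j : Fin (n - m)) : Fin (n + 1) := ⟨m + 1 + j, by have := j.2; omega⟩

@[simp] lemma val_leftPos (t : Fin m) : (leftPos m t : ℕ) = t := rfl

@[simp] lemma val_rightPos (j : Fin (n - m)) : (rightPos m j : ℕ) = m + 1 + j := rfl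

variable {m}

lemma strictMono_leftPos : StrictMono (leftPos m) := fun _ _ h => h

lemma strictMono_rightPos : StrictMono (rightPos m) := fun a b h => by
  rw [Fin.lt_def] at h ⊢
  simp only [val_rightPos]
  omega

lemma exists_eq_leftPos {x : Fin (n + 1)} (h : x < m) : ∃ t, x = leftPos m t :=
  ⟨⟨x, h⟩, rfl⟩

lemma exists_eq_rightPos {x : Fin (n + 1)} (h : m < x) : ∃ j, x = rightPos m j :=
  ⟨⟨x - (m + 1), by omega⟩, Fin.ext (by simp; omega)⟩

variable (m)

noncomputable def splitAt : Fin m ⊕ Unit ⊕ Fin (n - m) ≃ Fin (n + 1) :=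
  Equiv.ofBijective (Sum.elim (leftPos m) (Sum.elim (fun _ => m) (rightPos m))) <| by
    refine (Fintype.bijective_iff_injective_and_card _).2 ⟨?_, by simp; omega⟩
    rintro (a | _ | a) (b | _ | b) h <;> simp [Fin.ext_iff] at h ⊢ <;> omega

lemma sum_splitAt {M : Type*} [AddCommMonoid M] (g : Fin (n + 1) → M) :
    ∑ x, g x = ∑ t, g (leftPos m t) + g m + ∑ j, g (rightPos m j) := by
  rw [← Fintype.sum_equiv (splitAt m) _ _ fun _ => rfl]
  simp [Fintype.sum_sum_type, splitAt, add_assoc]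

end Positions

lemma Avoids132.of_strictMono {N M : ℕ} {σ : Perm (Fin N)} (hσ : Avoids132 N σ)
    {α : Perm (Fin M)} {p : Fin M → Fin N} (hp : StrictMono p)
    (hα : ∀ a b, α a < α b ↔ σ (p a) < σ (p b)) : Avoids132 M α :=
  fun _ _ _ hab hbc ⟨h₁, h₂⟩ => hσ _ _ _ (hp hab) (hp hbc) ⟨(hα _ _).1 h₁, (hα _ _).1 h₂⟩

section Permutations

variable {n : ℕ} (m : Fin (n + 1))

noncomputable def blockValues : Fin m ⊕ Unit ⊕ Fin (n - m) ≃ Fin (n + 1) :=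
  Equiv.ofBijective
    (Sum.elim (fun t => ⟨n - m + t, by omega⟩) (Sum.elim (fun _ => Fin.last n)
      fun j => ⟨j, by omega⟩)) <| by
    refine (Fintype.bijective_iff_injective_and_card _).2 ⟨?_, by simp; omega⟩
    rintro (a | _ | a) (b | _ | b) h <;> simp [Fin.ext_iff] at h ⊢ <;> omega

/-- The 132-avoider `(α ⊕ 1) ⊖ β`: `α` on the top values at positions `< m`, the maximum at
`m`, and `β` on the bottom values at positions `> m`. -/
noncomputable def permGlue (α : Perm (Fin m)) (β : Perm (Fin (n - m))) : Perm (Fin (n + 1)) :=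
  (splitAt m).symm.trans ((α.sumCongr ((Equiv.refl Unit).sumCongr β)).trans (blockValues m))

variable {m} (α : Perm (Fin m)) (β : Perm (Fin (n - m)))

@[simp] lemma permGlue_leftPos (t : Fin m) :
    (permGlue m α β (leftPos m t) : ℕ) = n - m + α t := by
  have : (splitAt m).symm (leftPos m t) = Sum.inl t := (Equiv.symm_apply_eq _).2 rfl
  simp [permGlue, this, blockValues]

@[simp] lemma permGlue_self : permGlue m α β m = Fin.last n := by
  have : (splitAt m).symm m = Sum.inr (Sum.inl ()) := (Equiv.symm_apply_eq _).2 rfl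
  simp [permGlue, this, blockValues]

@[simp] lemma permGlue_rightPos (j : Fin (n - m)) :
    (permGlue m α β (rightPos m j) : ℕ) = β j := by
  have : (splitAt m).symm (rightPos m j) = Sum.inr (Sum.inr j) := (Equiv.symm_apply_eq _).2 rfl
  simp [permGlue, this, blockValues]

lemma permGlue_symm_last : (permGlue m α β).symm (Fin.last n) = m :=
  (Equiv.symm_apply_eq _).2 (permGlue_self α β).symm

lemma eq_and_eq_of_permGlue_eq {α' : Perm (Fin m)} {β' : Perm (Fin (n - m))}
    (h : permGlue m α β = permGlue m α' β') : α = α' ∧ β = β' := by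
  refine ⟨Equiv.ext fun t => Fin.ext ?_, Equiv.ext fun j => Fin.ext ?_⟩
  · have := congrArg (fun σ : Perm (Fin (n + 1)) => (σ (leftPos m t) : ℕ)) h
    simp only [permGlue_leftPos] at this
    omega
  · simpa using congrArg (fun σ : Perm (Fin (n + 1)) => (σ (rightPos m j) : ℕ)) h

lemma leftLarger_permGlue_leftPos (t : Fin m) :
    leftLarger (permGlue m α β) (leftPos m t) = leftLarger α t := by
  have hm : ¬ (m : ℕ) < t := by omega
  have hr : ∀ j : Fin (n - m), ¬ (m + 1 + j : ℕ) < t := fun _ => by omega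
  rw [leftLarger, leftLarger, card_filter, card_filter, sum_splitAt m]
  simp only [Fin.lt_def, val_leftPos, val_rightPos, permGlue_leftPos, permGlue_self,
    permGlue_rightPos, add_lt_add_iff_left, hm, hr, false_and, if_false, sum_const_zero,
    add_zero]

lemma leftLarger_permGlue_self : leftLarger (permGlue m α β) m = 0 := by
  simp [leftLarger, Fin.le_last]

lemma leftLarger_permGlue_rightPos (j : Fin (n - m)) :
    leftLarger (permGlue m α β) (rightPos m j) = m + 1 + leftLarger β j := by
  have := (β j).2
  rw [leftLarger, leftLarger, card_filter, card_filter, sum_splitAt m]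
  simp only [Fin.lt_def, val_leftPos, val_rightPos, permGlue_leftPos, permGlue_self,
    permGlue_rightPos, Fin.val_last, add_lt_add_iff_left]
  rw [sum_congr rfl fun x _ => if_pos ⟨by omega, by omega⟩, if_pos ⟨by omega, by omega⟩]
  simp

lemma permGlue_leftPos_lt_iff (a b : Fin m) :
    permGlue m α β (leftPos m a) < permGlue m α β (leftPos m b) ↔ α a < α b := by
  rw [Fin.lt_def, Fin.lt_def, permGlue_leftPos, permGlue_leftPos]
  omega

lemma permGlue_rightPos_lt_iff (a b : Fin (n - m)) :
    permGlue m α β (rightPos m a) < permGlue m α β (rightPos m b) ↔ β a < β b := by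
  rw [Fin.lt_def, Fin.lt_def, permGlue_rightPos, permGlue_rightPos]

lemma permGlue_rightPos_lt_leftPos (a : Fin m) (b : Fin (n - m)) :
    permGlue m α β (rightPos m b) < permGlue m α β (leftPos m a) := by
  have := (β b).2
  rw [Fin.lt_def, permGlue_leftPos, permGlue_rightPos]
  omega

lemma avoids132_permGlue_iff :
    Avoids132 (n + 1) (permGlue m α β) ↔ Avoids132 m α ∧ Avoids132 (n - m) β := by
  refine ⟨fun h => ⟨h.of_strictMono strictMono_leftPos fun a b => (permGlue_leftPos_lt_iff ..).symm,
    h.of_strictMono strictMono_rightPos fun a b => (permGlue_rightPos_lt_iff ..).symm⟩, ?_⟩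
  rintro ⟨hα, hβ⟩ i j k hij hjk ⟨h₁, h₂⟩
  rcases lt_trichotomy k m with hk | rfl | hk
  · obtain ⟨c, rfl⟩ := exists_eq_leftPos hk
    obtain ⟨b, rfl⟩ := exists_eq_leftPos (hjk.trans hk)
    obtain ⟨a, rfl⟩ := exists_eq_leftPos ((hij.trans hjk).trans hk)
    rw [permGlue_leftPos_lt_iff] at h₁ h₂
    exact hα a b c (strictMono_leftPos.lt_iff_lt.1 hij) (strictMono_leftPos.lt_iff_lt.1 hjk)
      ⟨h₁, h₂⟩
  · rw [permGlue_self] at h₂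
    exact (Fin.le_last _).not_gt h₂
  · obtain ⟨c, rfl⟩ := exists_eq_rightPos hk
    rcases lt_trichotomy i m with hi | rfl | hi
    · obtain ⟨a, rfl⟩ := exists_eq_leftPos hi
      exact (permGlue_rightPos_lt_leftPos α β a c).not_gt h₁
    · rw [permGlue_self] at h₁
      exact (Fin.le_last _).not_gt h₁
    · obtain ⟨a, rfl⟩ := exists_eq_rightPos hi
      obtain ⟨b, rfl⟩ := exists_eq_rightPos (hi.trans hij)
      rw [permGlue_rightPos_lt_iff] at h₁ h₂
      exact hβ a b c (strictMono_rightPos.lt_iff_lt.1 hij) (strictMono_rightPos.lt_iff_lt.1 hjk)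
        ⟨h₁, h₂⟩

end Permutations

section Decomposition

variable {n : ℕ} {σ : Perm (Fin (n + 1))}

lemma apply_lt_last_of_ne_symm_last {x : Fin (n + 1)} (hx : x ≠ σ.symm (Fin.last n)) :
    σ x < Fin.last n :=
  Fin.lt_last_iff_ne_last.2 fun h => hx (σ.eq_symm_apply.2 h)

lemma Avoids132.apply_lt_apply_of_lt_symm_last (hσ : Avoids132 (n + 1) σ) {i j : Fin (n + 1)}
    (hi : i < σ.symm (Fin.last n)) (hj : σ.symm (Fin.last n) < j) : σ j < σ i := by
  refine lt_of_le_of_ne (not_lt.1 fun h => hσ i _ j hi hj ⟨h, ?_⟩)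
    (σ.injective.ne (hi.trans hj).ne')
  rw [apply_symm_apply]
  exact apply_lt_last_of_ne_symm_last hj.ne'

lemma Avoids132.sub_le_apply_of_lt_symm_last (hσ : Avoids132 (n + 1) σ) {i : Fin (n + 1)}
    (hi : i < σ.symm (Fin.last n)) : n - σ.symm (Fin.last n) ≤ σ i := by
  have := card_le_card_of_injOn σ (s := Ioi (σ.symm (Fin.last n))) (t := Iio (σ i))
    (fun j hj => by simpa using hσ.apply_lt_apply_of_lt_symm_last hi (by simpa using hj))
    σ.injective.injOn
  simpa using this

lemma Avoids132.apply_add_le_of_symm_last_lt (hσ : Avoids132 (n + 1) σ) {j : Fin (n + 1)}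
    (hj : σ.symm (Fin.last n) < j) : σ j + (σ.symm (Fin.last n) + 1) ≤ n := by
  have := card_le_card_of_injOn σ (s := Iic (σ.symm (Fin.last n))) (t := Ioi (σ j))
    (fun i hi => by
      simp only [coe_Iic, coe_Ioi, Set.mem_Iic, Set.mem_Ioi] at hi ⊢
      rcases hi.lt_or_eq with hi | rfl
      · exact hσ.apply_lt_apply_of_lt_symm_last hi hj
      · rw [apply_symm_apply]
        exact apply_lt_last_of_ne_symm_last hj.ne')
    σ.injective.injOn
  simp at this
  omega

lemma Avoids132.exists_eq_permGlue (hσ : Avoids132 (n + 1) σ) :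
    ∃ m α β, σ = permGlue m α β := by
  set m := σ.symm (Fin.last n)
  have hleft (t : Fin m) : n - m ≤ σ (leftPos m t) ∧ σ (leftPos m t) < n :=
    ⟨hσ.sub_le_apply_of_lt_symm_last t.2,
      apply_lt_last_of_ne_symm_last (Fin.ne_of_lt (show leftPos m t < m from t.2))⟩
  have hright (j : Fin (n - m)) : σ (rightPos m j) + (m + 1) ≤ n :=
    hσ.apply_add_le_of_symm_last_lt (show m < rightPos m j by rw [Fin.lt_def, val_rightPos]; omega)
  let α : Perm (Fin m) := Equiv.ofBijective (fun t => ⟨σ (leftPos m t) - (n - m), by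
    have := hleft t; omega⟩) <| Finite.injective_iff_bijective.1 fun s t h =>
      strictMono_leftPos.injective <| σ.injective <| Fin.ext <| by
        have := hleft s; have := hleft t
        simp only [Fin.mk.injEq] at h
        omega
  let β : Perm (Fin (n - m)) := Equiv.ofBijective (fun j => ⟨σ (rightPos m j), by
    have := hright j; omega⟩) <| Finite.injective_iff_bijective.1 fun s t h =>
      strictMono_rightPos.injective <| σ.injective <| Fin.ext <| by simpa using h
  refine ⟨m, α, β, Equiv.ext fun x => Fin.ext ?_⟩
  rcases lt_trichotomy x m with hx | rfl | hx
  · obtain ⟨t, rfl⟩ := exists_eq_leftPos hx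
    have := hleft t
    simp [α]
    omega
  · simp [m]
  · obtain ⟨j, rfl⟩ := exists_eq_rightPos hx
    simp [β]

end Decomposition

section Avoiders

def boundedAvoiders (n k : ℕ) : Set (Perm (Fin n)) :=
  {σ | Avoids132 n σ ∧ ∀ i, leftLarger σ i < k}

variable {n k : ℕ}

lemma mem_boundedAvoiders {σ : Perm (Fin n)} :
    σ ∈ boundedAvoiders n k ↔ Avoids132 n σ ∧ ∀ i, leftLarger σ i < k := Iff.rfl

variable {m : Fin (n + 1)}

lemma permGlue_mem_boundedAvoiders_iff (hk : 1 ≤ k) (α : Perm (Fin m)) (β : Perm (Fin (n - m))) :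
    permGlue m α β ∈ boundedAvoiders (n + 1) k ↔
      α ∈ boundedAvoiders m k ∧ β ∈ boundedAvoiders (n - m) (k - (m + 1)) := by
  simp only [mem_boundedAvoiders, avoids132_permGlue_iff]
  refine ⟨fun ⟨⟨hα, hβ⟩, h⟩ => ⟨⟨hα, fun t => ?_⟩, ⟨hβ, fun j => ?_⟩⟩,
    fun ⟨⟨hα, hα'⟩, ⟨hβ, hβ'⟩⟩ => ⟨⟨hα, hβ⟩, fun i => ?_⟩⟩
  · simpa [leftLarger_permGlue_leftPos] using h (leftPos m t)
  · have := h (rightPos m j)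
    rw [leftLarger_permGlue_rightPos] at this
    omega
  · rcases lt_trichotomy i m with hi | rfl | hi
    · obtain ⟨t, rfl⟩ := exists_eq_leftPos hi
      simpa [leftLarger_permGlue_leftPos] using hα' t
    · rw [leftLarger_permGlue_self]
      exact hk
    · obtain ⟨j, rfl⟩ := exists_eq_rightPos hi
      have := hβ' j
      rw [leftLarger_permGlue_rightPos]
      omega

lemma card_boundedAvoiders_succ (hk : 1 ≤ k) :
    Nat.card (boundedAvoiders (n + 1) k) = ∑ m : Fin (n + 1),
      Nat.card (boundedAvoiders m k) * Nat.card (boundedAvoiders (n - m) (k - (m + 1))) :=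
  card_eq_sum_of_glue (fun m α β => permGlue m α.1 β.1)
    (fun _ α β => (permGlue_mem_boundedAvoiders_iff hk _ _).2 ⟨α.2, β.2⟩)
    (fun m m' α β α' β' h => by
      rw [← permGlue_symm_last α.1 β.1, ← permGlue_symm_last α'.1 β'.1, h])
    (fun _ _ _ _ _ h => by
      obtain ⟨hα, hβ⟩ := eq_and_eq_of_permGlue_eq _ _ h
      exact ⟨Subtype.ext hα, Subtype.ext hβ⟩)
    (fun σ hσ => by
      obtain ⟨m, α, β, rfl⟩ := hσ.1.exists_eq_permGlue
      obtain ⟨hα, hβ⟩ := (permGlue_mem_boundedAvoiders_iff hk α β).1 hσ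
      exact ⟨m, ⟨α, hα⟩, ⟨β, hβ⟩, rfl⟩)
lemma card_boundedAvoiders_zero : Nat.card (boundedAvoiders 0 k) = 1 := by
  simp [boundedAvoiders, Avoids132]

lemma boundedAvoiders_succ_zero : boundedAvoiders (n + 1) 0 = ∅ := by
  simp [boundedAvoiders]

end Avoiders

section ParkingFunctions

variable {n : ℕ} (m : Fin (n + 1))

def succLeftPos (t : Fin m) : Fin (n + 1) := ⟨t + 1, by omega⟩

@[simp] lemma val_succLeftPos (t : Fin m) : (succLeftPos m t : ℕ) = t + 1 := rfl

def parkingGlue (u : Fin m → ℕ) (w : Fin (n - m) → ℕ) (x : Fin (n + 1)) : ℕ :=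
  if hx : (x : ℕ) = 0 then 1
  else if hm : (x : ℕ) ≤ m then u ⟨x - 1, by omega⟩
  else m + 1 + w ⟨x - (m + 1), by omega⟩

variable {m} (u : Fin m → ℕ) (w : Fin (n - m) → ℕ)

@[simp] lemma parkingGlue_zero : parkingGlue m u w 0 = 1 := rfl

@[simp] lemma parkingGlue_succLeftPos (t : Fin m) : parkingGlue m u w (succLeftPos m t) = u t := by
  simp [parkingGlue, Nat.succ_le_of_lt t.2]

@[simp] lemma parkingGlue_rightPos (j : Fin (n - m)) :
    parkingGlue m u w (rightPos m j) = m + 1 + w j := by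
  simp [parkingGlue, show ¬ (m : ℕ) + 1 + j ≤ m by omega]

lemma eq_zero_or_eq_succLeftPos_or_eq_rightPos (x : Fin (n + 1)) :
    x = 0 ∨ (∃ t, x = succLeftPos m t) ∨ ∃ j, x = rightPos m j := by
  rcases Nat.eq_zero_or_pos x with hx | hx
  · exact .inl (Fin.ext hx)
  rcases le_or_gt (x : ℕ) m with hxm | hxm
  · exact .inr (.inl ⟨⟨x - 1, by omega⟩, Fin.ext (by simp; omega)⟩)
  · exact .inr (.inr (exists_eq_rightPos hxm))

end ParkingFunctions

section ParkingRecursion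

def boundedParking (n k : ℕ) : Set (Fin n → ℕ) := {f | NDParking n f ∧ ∀ i, f i ≤ k}

variable {n k : ℕ}

lemma boundedParking_finite : (boundedParking n k).Finite :=
  (Set.Finite.pi fun _ => Set.finite_Iic k).subset fun _ hf i _ => hf.2 i

variable {m : Fin (n + 1)} {u : Fin m → ℕ} {w : Fin (n - m) → ℕ}

lemma parkingGlue_mem (hk : 1 ≤ k) (hu : u ∈ boundedParking m k)
    (hw : w ∈ boundedParking (n - m) (k - (m + 1))) :
    parkingGlue m u w ∈ boundedParking (n + 1) k := by
  obtain ⟨⟨hum, hub⟩, huk⟩ := hu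
  obtain ⟨⟨hwm, hwb⟩, hwk⟩ := hw
  refine ⟨⟨fun x y hxy => ?_, fun x => ?_⟩, fun x => ?_⟩
  · rw [Fin.le_def] at hxy
    rcases eq_zero_or_eq_succLeftPos_or_eq_rightPos (m := m) x with rfl | ⟨s, rfl⟩ | ⟨i, rfl⟩ <;>
    rcases eq_zero_or_eq_succLeftPos_or_eq_rightPos (m := m) y with rfl | ⟨t, rfl⟩ | ⟨j, rfl⟩ <;>
    simp only [parkingGlue_zero, parkingGlue_succLeftPos, parkingGlue_rightPos, val_succLeftPos,
      val_rightPos, Fin.val_zero] at hxy ⊢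
    all_goals first
      | omega
      | exact (hub _).1
      | exact hum (Fin.le_def.2 (by omega))
      | (have := (hub s).2; have := s.2; omega)
      | exact Nat.add_le_add_left (hwm (Fin.le_def.2 (by omega))) _
  · rcases eq_zero_or_eq_succLeftPos_or_eq_rightPos (m := m) x with rfl | ⟨t, rfl⟩ | ⟨j, rfl⟩
    · simp
    · have := hub t; simp; omega
    · have := hwb j; simp; omega
  · rcases eq_zero_or_eq_succLeftPos_or_eq_rightPos (m := m) x with rfl | ⟨t, rfl⟩ | ⟨j, rfl⟩
    · simpa using hk
    · simpa using huk t
    · have := hwb j; have := hwk j; simp; omega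

lemma NDParking.exists_firstReturn {f : Fin (n + 1) → ℕ} (hf : NDParking (n + 1) f) :
    ∃ m : Fin (n + 1), (∀ t : Fin m, f (succLeftPos m t) ≤ t + 1) ∧
      ∀ j : Fin (n - m), m + 2 ≤ f (rightPos m j) := by
  by_cases h : ∃ x : Fin (n + 1), x ≠ 0 ∧ (x : ℕ) < f x
  · obtain ⟨x, ⟨hx0, hx⟩, hmin⟩ : ∃ x : Fin (n + 1), (x ≠ 0 ∧ (x : ℕ) < f x) ∧
        ∀ y < x, ¬ (y ≠ 0 ∧ (y : ℕ) < f y) :=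
      ⟨_, Fin.find_spec h, fun _ hy => Fin.find_min h hy⟩
    have hx0 : (x : ℕ) ≠ 0 := fun h => hx0 (Fin.ext h)
    refine ⟨⟨x - 1, by omega⟩, fun t => ?_, fun j => ?_⟩
    · have := hmin (succLeftPos _ t) (Fin.lt_def.2 (by simp; omega))
      simp only [ne_eq, not_and, not_lt] at this
      exact this (by simp [Fin.ext_iff])
    · have := hf.1 (show x ≤ rightPos _ j from Fin.le_def.2 (by simp; omega))
      simp only at this ⊢
      omega
  · simp only [not_exists, not_and, not_lt] at h
    refine ⟨Fin.last n, fun t => h _ (by simp [Fin.ext_iff]), fun j => ?_⟩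
    have := j.2
    simp at this

lemma exists_eq_parkingGlue {f : Fin (n + 1) → ℕ} (hf : f ∈ boundedParking (n + 1) k) :
    ∃ (m : Fin (n + 1)) (u : Fin m → ℕ) (w : Fin (n - m) → ℕ), u ∈ boundedParking m k ∧
      w ∈ boundedParking (n - m) (k - (m + 1)) ∧ parkingGlue m u w = f := by
  obtain ⟨⟨hfm, hfb⟩, hfk⟩ := hf
  obtain ⟨m, hleft, hright⟩ := NDParking.exists_firstReturn ⟨hfm, hfb⟩
  have hu : (fun t => f (succLeftPos m t)) ∈ boundedParking m k :=
    ⟨⟨fun s t hst => hfm (Fin.le_def.2 (by simpa using hst)), fun t => ⟨(hfb _).1, hleft t⟩⟩,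
      fun t => hfk _⟩
  have hw : (fun j => f (rightPos m j) - (m + 1)) ∈ boundedParking (n - m) (k - (m + 1)) := by
    refine ⟨⟨fun i j hij => Nat.sub_le_sub_right (hfm (Fin.le_def.2 (by simpa using hij))) _,
      fun j => ?_⟩, fun j => Nat.sub_le_sub_right (hfk _) _⟩
    have h₁ := hright j
    have h₂ := (hfb (rightPos m j)).2
    simp only [val_rightPos] at h₂
    dsimp only
    omega
  refine ⟨m, _, _, hu, hw, funext fun x => ?_⟩
  rcases eq_zero_or_eq_succLeftPos_or_eq_rightPos (m := m) x with rfl | ⟨t, rfl⟩ | ⟨j, rfl⟩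
  · have := hfb 0
    simp only [Fin.val_zero] at this
    simp only [parkingGlue_zero]
    omega
  · simp
  · have := hright j
    simp only [parkingGlue_rightPos]
    omega

lemma le_of_parkingGlue_eq {m' : Fin (n + 1)} {u' : Fin m' → ℕ} {w' : Fin (n - m') → ℕ}
    (hw : ∀ j, 1 ≤ w j) (hu' : ∀ t : Fin m', u' t ≤ t + 1)
    (h : parkingGlue m u w = parkingGlue m' u' w') : m' ≤ m := by
  by_contra! hm
  have hpos : rightPos m ⟨0, by omega⟩ = succLeftPos m' ⟨m, hm⟩ := Fin.ext (by simp)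
  have := congrFun h (rightPos m ⟨0, by omega⟩)
  rw [parkingGlue_rightPos, hpos, parkingGlue_succLeftPos] at this
  have := hw ⟨0, by omega⟩
  have := hu' ⟨m, hm⟩
  simp only at *
  omega

lemma eq_and_eq_of_parkingGlue_eq {u' : Fin m → ℕ} {w' : Fin (n - m) → ℕ}
    (h : parkingGlue m u w = parkingGlue m u' w') : u = u' ∧ w = w' :=
  ⟨funext fun t => by simpa using congrFun h (succLeftPos m t),
    funext fun j => by simpa using congrFun h (rightPos m j)⟩

lemma card_boundedParking_succ (hk : 1 ≤ k) :
    Nat.card (boundedParking (n + 1) k) = ∑ m : Fin (n + 1),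
      Nat.card (boundedParking m k) * Nat.card (boundedParking (n - m) (k - (m + 1))) :=
  have := fun N K => (boundedParking_finite (n := N) (k := K)).to_subtype
  card_eq_sum_of_glue (fun m u w => parkingGlue m u.1 w.1)
    (fun _ u w => parkingGlue_mem hk u.2 w.2)
    (fun _ _ u w u' w' h => le_antisymm
      (le_of_parkingGlue_eq (fun j => (w'.2.1.2 j).1) (fun t => (u.2.1.2 t).2) h.symm)
      (le_of_parkingGlue_eq (fun j => (w.2.1.2 j).1) (fun t => (u'.2.1.2 t).2) h))
    (fun _ _ _ _ _ h => by
      obtain ⟨hu, hw⟩ := eq_and_eq_of_parkingGlue_eq h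
      exact ⟨Subtype.ext hu, Subtype.ext hw⟩)
    (fun f hf => by
      obtain ⟨m, u, w, hu, hw, rfl⟩ := exists_eq_parkingGlue hf
      exact ⟨m, ⟨u, hu⟩, ⟨w, hw⟩, rfl⟩)

lemma card_boundedParking_zero : Nat.card (boundedParking 0 k) = 1 := by
  simp [boundedParking, NDParking, Subsingleton.monotone]

lemma boundedParking_succ_zero : boundedParking (n + 1) 0 = ∅ :=
  Set.eq_empty_of_forall_notMem fun _ ⟨⟨_, hb⟩, hk⟩ => by
    have := (hb 0).1
    have := hk 0
    omega

end ParkingRecursion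

theorem card_boundedParking_eq_card_boundedAvoiders (n k : ℕ) :
    Nat.card (boundedParking n k) = Nat.card (boundedAvoiders n k) := by
  induction n using Nat.strong_induction_on generalizing k with
  | _ n ih =>
  rcases n with _ | n
  · rw [card_boundedParking_zero, card_boundedAvoiders_zero]
  rcases Nat.eq_zero_or_pos k with rfl | hk
  · simp [boundedParking_succ_zero, boundedAvoiders_succ_zero]
  rw [card_boundedParking_succ hk, card_boundedAvoiders_succ hk]
  exact sum_congr rfl fun m _ => by rw [ih m (by omega), ih (n - m) (by omega)]

theorem card_ndParking_le_eq_card_mmp0k00_zero_general (n k : ℕ) :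
    Nat.card {f : Fin n → ℕ | NDParking n f ∧ ∀ i : Fin n, f i ≤ k} =
    Nat.card {σ : Equiv.Perm (Fin n) | Avoids132 n σ ∧ mmp n 0 k 0 0 σ = 0} := by
  simp only [mmp_zero_k_zero_zero_eq_zero_iff]
  exact card_boundedParking_eq_card_boundedAvoiders n k

/-- The number of non-decreasing parking functions of length `n` with all values at most
`k` equals the number of 132-avoiding permutations `σ` of `{1,…,n}` with
`mmp(0,k,0,0)(σ) = 0`. -/
theorem card_ndParking_le_eq_card_mmp0k00_zero (n k : ℕ) (hn : 1 ≤ n) (hk : 1 ≤ k) :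
    Nat.card {f : Fin n → ℕ | NDParking n f ∧ ∀ i : Fin n, f i ≤ k} =
    Nat.card {σ : Equiv.Perm (Fin n) | Avoids132 n σ ∧ mmp n 0 k 0 0 σ = 0} :=
  card_ndParking_le_eq_card_mmp0k00_zero_general n k
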